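/- arXiv:1902.04952 — 2 statements merged into one kernel-verified Lean document; each statement's English description precedes it below -/
import Mathlib

section
/- Let H be a d×d symmetric positive definite real matrix with condition number κ, let w* ∈ ℝ^d, and let ε ∈ (0, 1/2]. Consider the quadratic objective with constant Hessian H and minimizer w*, so the gradient at w is g(w) = H(w − w*). Suppose at each iteration t there are m symmetric positive definite matrices H̃_{t,1}, …, H̃_{t,m} such that (1−ε)H ⪯ H̃_{t,i} ⪯ (1+ε)H for every i ∈ [m] and (1/m)·Σ_{i=1}^m H̃_{t,i} = H, and the iterates are updated by w_{t+1} = w_t − (1/m)·Σ_{i=1}^m H̃_{t,i}⁻¹ g(w_t). Then for every t ≥ 0, ‖w_t − w*‖₂ ≤ (3ε²)^t · √κ · ‖w_0 − w*‖₂. -/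
/-!
Let `R = H^{1/2}` and `Bᵢ = R⁻¹ H̃ᵢ R⁻¹`. Measured in the `H`-norm `x ↦ ‖R x‖`, one GIANT step
multiplies the error by `1 - (1/m) ∑ Bᵢ⁻¹`. The `Bᵢ` average to `1`, so this operator equals
`-(1/m) ∑ (Bᵢ - 2 + Bᵢ⁻¹)`, and `Bᵢ - 2 + Bᵢ⁻¹ = (Bᵢ - 1)² Bᵢ⁻¹` has norm at most `ε²/(1-ε) ≤ 3ε²`
because the spectrum of `Bᵢ` lies in `[1-ε, 1+ε]`. Going back from the `H`-norm to the Euclidean norm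
costs the factor `‖R‖ ‖R⁻¹‖ = √κ`.
-/

open Matrix

noncomputable section

/-- The Euclidean (ℓ2) norm of a vector in `ℝ^d`. -/
def norm2 {d : ℕ} (x : Fin d → ℝ) : ℝ := Real.sqrt (x ⬝ᵥ x)

/-- The smallest eigenvalue of a Hermitian matrix. -/
def sMin {d : ℕ} {H : Matrix (Fin d) (Fin d) ℝ} (hH : H.IsHermitian) : ℝ :=
  ⨅ i, hH.eigenvalues i

/-- The largest eigenvalue of a Hermitian matrix. -/
def sMax {d : ℕ} {H : Matrix (Fin d) (Fin d) ℝ} (hH : H.IsHermitian) : ℝ :=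
  ⨆ i, hH.eigenvalues i

open Set
open scoped Matrix.Norms.L2Operator MatrixOrder Ring

lemma ringInverse_mul_mul_eq {M₀ : Type*} [MonoidWithZero M₀] {r s T : M₀} (hrs : r * s = 1)
    (hsr : s * r = 1) (hT : IsUnit T) : (s * T * s)⁻¹ʳ = r * T⁻¹ʳ * r := by
  have hright : s * T * s * (r * T⁻¹ʳ * r) = 1 := by
    simp only [mul_assoc]
    rw [← mul_assoc s r, hsr, one_mul, Ring.mul_inverse_cancel_left T r hT, hsr]
  have hleft : r * T⁻¹ʳ * r * (s * T * s) = 1 := by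
    simp only [mul_assoc]
    rw [← mul_assoc r s, hrs, one_mul, Ring.inverse_mul_cancel_left T s hT, hrs]
  exact Ring.inverse_unit ⟨_, _, hright, hleft⟩

section IsometricCFC

variable {A : Type*} [NormedRing A] [StarRing A] [NormedAlgebra ℝ A]
  [IsometricContinuousFunctionalCalculus ℝ A IsSelfAdjoint]

lemma exists_sqrt_with_inverse_of_spectrum_subset_Icc {a : A} (ha : IsSelfAdjoint a) {μ M : ℝ}
    (hμ : 0 < μ) (hspec : spectrum ℝ a ⊆ Icc μ M) :
    ∃ r s : A, IsSelfAdjoint s ∧ r * r = a ∧ r * s = 1 ∧ s * r = 1 ∧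
      ‖r‖ ≤ √M ∧ ‖s‖ ≤ (√μ)⁻¹ := by
  have hpos : ∀ x ∈ spectrum ℝ a, 0 < x := fun x hx => hμ.trans_le (hspec hx).1
  have hsqrt_pos : ∀ x ∈ spectrum ℝ a, 0 < √x := fun x hx => Real.sqrt_pos.mpr (hpos x hx)
  have hcont : ContinuousOn (fun x : ℝ => (√x)⁻¹) (spectrum ℝ a) :=
    Real.continuous_sqrt.continuousOn.inv₀ fun x hx => (hsqrt_pos x hx).ne'
  refine ⟨cfc Real.sqrt a, cfc (fun x => (√x)⁻¹) a, cfc_predicate _ _, ?_, ?_, ?_, ?_, ?_⟩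
  · rw [← cfc_mul ..]
    conv_rhs => rw [← cfc_id' ℝ a]
    exact cfc_congr fun x hx => Real.mul_self_sqrt (hpos x hx).le
  · rw [← cfc_mul .., ← cfc_one ℝ a]
    exact cfc_congr fun x hx => mul_inv_cancel₀ (hsqrt_pos x hx).ne'
  · rw [← cfc_mul .., ← cfc_one ℝ a]
    exact cfc_congr fun x hx => inv_mul_cancel₀ (hsqrt_pos x hx).ne'
  · refine norm_cfc_le (Real.sqrt_nonneg M) fun x hx => ?_
    rw [Real.norm_of_nonneg (Real.sqrt_nonneg x)]
    exact Real.sqrt_le_sqrt (hspec hx).2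
  · refine norm_cfc_le (inv_nonneg.mpr (Real.sqrt_nonneg μ)) fun x hx => ?_
    rw [Real.norm_of_nonneg (inv_nonneg.mpr (Real.sqrt_nonneg x))]
    exact inv_anti₀ (Real.sqrt_pos.mpr hμ) (Real.sqrt_le_sqrt (hspec hx).1)

lemma norm_sub_two_add_inverse_le {b : A} (hb : IsSelfAdjoint b) {ε : ℝ} (hε : ε < 1)
    (hspec : spectrum ℝ b ⊆ Icc (1 - ε) (1 + ε)) : ‖b - 2 + b⁻¹ʳ‖ ≤ ε ^ 2 / (1 - ε) := by
  have hpos : ∀ x ∈ spectrum ℝ b, 0 < x := fun x hx => by linarith [(hspec hx).1]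
  have hunit : IsUnit b := spectrum.isUnit_of_zero_notMem ℝ fun h => (hpos 0 h).false
  have hcont : ContinuousOn (fun x : ℝ => x⁻¹) (spectrum ℝ b) :=
    continuousOn_inv₀.mono fun x hx => (hpos x hx).ne'
  have hcfc : b - 2 + b⁻¹ʳ = cfc (fun x : ℝ => x - 2 + x⁻¹) b := by
    rw [cfc_add (a := b) (fun x : ℝ => x - 2) (fun x : ℝ => x⁻¹), cfc_sub .., cfc_id' ..,
      cfc_const .., cfc_ringInverse_id b hunit, map_ofNat]
  rw [hcfc]
  refine norm_cfc_le (div_nonneg (sq_nonneg ε) (by linarith)) fun x hx => ?_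
  obtain ⟨hlo, hhi⟩ := hspec hx
  have hx0 := hpos x hx
  rw [Real.norm_eq_abs, show x - 2 + x⁻¹ = (x - 1) ^ 2 / x by field_simp; ring,
    abs_of_nonneg (by positivity)]
  exact div_le_div₀ (sq_nonneg ε) (sq_le_sq' (by linarith) (by linarith)) (by linarith) hlo

lemma norm_one_sub_average_inverse_le {m : ℕ} {B : Fin m → A} (hB : ∀ i, IsSelfAdjoint (B i))
    {ε : ℝ} (hε : ε < 1) (hspec : ∀ i, spectrum ℝ (B i) ⊆ Icc (1 - ε) (1 + ε))
    (havg : (1 / m : ℝ) • ∑ i, B i = 1) :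
    ‖1 - (1 / m : ℝ) • ∑ i, (B i)⁻¹ʳ‖ ≤ ε ^ 2 / (1 - ε) := by
  have hq : 0 ≤ ε ^ 2 / (1 - ε) := div_nonneg (sq_nonneg ε) (by linarith)
  rcases eq_or_ne m 0 with rfl | hm
  · simp only [Finset.univ_eq_empty, Finset.sum_empty, smul_zero] at havg ⊢
    rwa [sub_zero, ← havg, norm_zero]
  replace hm : (m : ℝ) ≠ 0 := Nat.cast_ne_zero.mpr hm
  have hcentered : 1 - (1 / m : ℝ) • ∑ i, (B i)⁻¹ʳ
      = -((1 / m : ℝ) • ∑ i, (B i - 2 + (B i)⁻¹ʳ)) := by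
    rw [Finset.sum_add_distrib, Finset.sum_sub_distrib, smul_add, smul_sub, havg,
      Finset.sum_const, Finset.card_univ, Fintype.card_fin, ← Nat.cast_smul_eq_nsmul ℝ, smul_smul,
      one_div_mul_cancel hm, one_smul, ← one_add_one_eq_two]
    abel
  calc ‖1 - (1 / m : ℝ) • ∑ i, (B i)⁻¹ʳ‖
      ≤ (1 / m : ℝ) * ∑ i, ‖B i - 2 + (B i)⁻¹ʳ‖ := by
        rw [hcentered, norm_neg, norm_smul, Real.norm_of_nonneg (by positivity)]
        gcongr
        exact norm_sum_le _ _
    _ ≤ (1 / m : ℝ) * ∑ _i : Fin m, ε ^ 2 / (1 - ε) := by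
        gcongr with i
        exact norm_sub_two_add_inverse_le (hB i) hε (hspec i)
    _ = ε ^ 2 / (1 - ε) := by
        rw [Finset.sum_const, Finset.card_univ, Fintype.card_fin, nsmul_eq_mul, ← mul_assoc,
          one_div_mul_cancel hm, one_mul]

variable [PartialOrder A] [StarOrderedRing A] [NonnegSpectrumClass ℝ A]

lemma norm_mul_one_sub_average_inverse_mul_mul_le {a r s : A} (hs : IsSelfAdjoint s)
    (hrr : r * r = a) (hrs : r * s = 1) (hsr : s * r = 1) {m : ℕ} {T : Fin m → A}
    (hT : ∀ i, IsSelfAdjoint (T i)) (hTunit : ∀ i, IsUnit (T i)) {ε : ℝ} (hε : ε < 1)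
    (hbounds : ∀ i, (1 - ε) • a ≤ T i ∧ T i ≤ (1 + ε) • a)
    (havg : (1 / m : ℝ) • ∑ i, T i = a) :
    ‖r * (1 - (1 / m : ℝ) • ∑ i, (T i)⁻¹ʳ * a) * s‖ ≤ ε ^ 2 / (1 - ε) := by
  have hsas : s * a * s = 1 := by
    rw [← hrr, mul_assoc s, mul_assoc r, hrs, mul_one, hsr]
  have has : a * s = r := by rw [← hrr, mul_assoc, hrs, mul_one]
  have hconj (c : ℝ) : algebraMap ℝ A c = s * (c • a) * s := by
    rw [mul_smul_comm, smul_mul_assoc, hsas, Algebra.algebraMap_eq_smul_one]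
  have hB : ∀ i, IsSelfAdjoint (s * T i * s) := fun i => by
    simpa only [hs.star_eq] using (hT i).conjugate s
  have hspec (i : Fin m) : spectrum ℝ (s * T i * s) ⊆ Icc (1 - ε) (1 + ε) := fun x hx =>
    ⟨(algebraMap_le_iff_le_spectrum (hB i)).mp
        (hconj _ ▸ hs.conjugate_le_conjugate (hbounds i).1) x hx,
      (le_algebraMap_iff_spectrum_le (hB i)).mp
        (hconj _ ▸ hs.conjugate_le_conjugate (hbounds i).2) x hx⟩
  have havgB : (1 / m : ℝ) • ∑ i, s * T i * s = 1 := by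
    rw [← Finset.sum_mul, ← Finset.mul_sum, ← smul_mul_assoc, ← mul_smul_comm, havg, hsas]
  have hinv (i : Fin m) : (s * T i * s)⁻¹ʳ = r * (T i)⁻¹ʳ * r :=
    ringInverse_mul_mul_eq hrs hsr (hTunit i)
  have hconjugated : r * (1 - (1 / m : ℝ) • ∑ i, (T i)⁻¹ʳ * a) * s
      = 1 - (1 / m : ℝ) • ∑ i, (s * T i * s)⁻¹ʳ := by
    simp only [hinv]
    simp only [mul_sub, sub_mul, mul_one, hrs, mul_smul_comm, smul_mul_assoc, Finset.mul_sum,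
      Finset.sum_mul, mul_assoc, has]
  rw [hconjugated]
  exact norm_one_sub_average_inverse_le hB hε hspec havgB

end IsometricCFC

section EuclideanMatrix

variable {d : ℕ}

lemma norm2_eq_norm_toLp (x : Fin d → ℝ) : norm2 x = ‖WithLp.toLp 2 x‖ := by
  rw [norm2, EuclideanSpace.norm_eq]
  simp [dotProduct, sq]

lemma norm2_mulVec_le (M : Matrix (Fin d) (Fin d) ℝ) (x : Fin d → ℝ) :
    norm2 (M *ᵥ x) ≤ ‖M‖ * norm2 x := by
  rw [norm2_eq_norm_toLp, norm2_eq_norm_toLp]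
  exact M.l2_opNorm_mulVec (WithLp.toLp 2 x)

lemma norm2_le_pow_of_norm_mul_mul_le {r s : Matrix (Fin d) (Fin d) ℝ} (hsr : s * r = 1)
    {G : ℕ → Matrix (Fin d) (Fin d) ℝ} {e : ℕ → Fin d → ℝ} (he : ∀ t, e (t + 1) = G t *ᵥ e t)
    {q : ℝ} (hG : ∀ t, ‖r * G t * s‖ ≤ q) (t : ℕ) :
    norm2 (e t) ≤ ‖s‖ * q ^ t * ‖r‖ * norm2 (e 0) := by
  have hq : 0 ≤ q := (norm_nonneg _).trans (hG 0)
  have hstep (t : ℕ) : r *ᵥ e (t + 1) = (r * G t * s) *ᵥ (r *ᵥ e t) := by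
    rw [he, mulVec_mulVec, mulVec_mulVec, Matrix.mul_assoc (r * G t), hsr, Matrix.mul_one]
  have hrate (t : ℕ) : norm2 (r *ᵥ e t) ≤ q ^ t * norm2 (r *ᵥ e 0) := by
    induction t with
    | zero => simp
    | succ t ih =>
      calc norm2 (r *ᵥ e (t + 1)) ≤ ‖r * G t * s‖ * norm2 (r *ᵥ e t) := by
            rw [hstep]; exact norm2_mulVec_le _ _
        _ ≤ q * (q ^ t * norm2 (r *ᵥ e 0)) := by
            gcongr
            exacts [Real.sqrt_nonneg _, hG t]
        _ = q ^ (t + 1) * norm2 (r *ᵥ e 0) := by ring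
  calc norm2 (e t) = norm2 (s *ᵥ (r *ᵥ e t)) := by rw [mulVec_mulVec, hsr, one_mulVec]
    _ ≤ ‖s‖ * (q ^ t * (‖r‖ * norm2 (e 0))) := by
        refine (norm2_mulVec_le _ _).trans ?_
        gcongr
        exact (hrate t).trans (by gcongr; exact norm2_mulVec_le _ _)
    _ = ‖s‖ * q ^ t * ‖r‖ * norm2 (e 0) := by ring

lemma spectrum_subset_Icc_sMin_sMax {H : Matrix (Fin d) (Fin d) ℝ} (hH : H.IsHermitian) :
    spectrum ℝ H ⊆ Icc (sMin hH) (sMax hH) := by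
  rw [hH.spectrum_real_eq_range_eigenvalues]
  rintro _ ⟨j, rfl⟩
  exact ⟨ciInf_le (finite_range _).bddBelow j, le_ciSup (finite_range _).bddAbove j⟩

lemma sMin_pos [Nonempty (Fin d)] {H : Matrix (Fin d) (Fin d) ℝ} (hH : H.PosDef) :
    0 < sMin hH.1 := by
  obtain ⟨j, hj⟩ := exists_eq_ciInf_of_finite (f := hH.1.eigenvalues)
  exact (hH.eigenvalues_pos j).trans_eq hj

end EuclideanMatrix

/-- global convergence of GIANT (averaged local Newton directions) for a
quadratic objective with constant Hessian `H` and minimizer `wstar`. -/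
theorem giant_global_convergence_quadratic {d m : ℕ}
    (H : Matrix (Fin d) (Fin d) ℝ) (hH : H.PosDef)
    (wstar : Fin d → ℝ) (ε : ℝ) (hε : 0 < ε ∧ ε ≤ 1 / 2)
    (Htil : ℕ → Fin m → Matrix (Fin d) (Fin d) ℝ)
    (hHtilPD : ∀ t i, (Htil t i).PosDef)
    (happrox : ∀ t i,
      (Htil t i - (1 - ε) • H).PosSemidef ∧ ((1 + ε) • H - Htil t i).PosSemidef)
    (havg : ∀ t, ((1 : ℝ) / m) • ∑ i, Htil t i = H)
    (w : ℕ → Fin d → ℝ)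
    (hupdate : ∀ t,
      w (t + 1) = w t - ((1 : ℝ) / m) • ∑ i, (Htil t i)⁻¹ *ᵥ (H *ᵥ (w t - wstar))) :
    ∀ t, norm2 (w t - wstar) ≤
      (3 * ε ^ 2) ^ t * Real.sqrt (sMax hH.1 / sMin hH.1) * norm2 (w 0 - wstar) := by
  intro t
  rcases isEmpty_or_nonempty (Fin d) with hd | hd
  · simp [norm2]
  obtain ⟨r, s, hs, hrr, hrs, hsr, hr_le, hs_le⟩ :=
    exists_sqrt_with_inverse_of_spectrum_subset_Icc hH.1.isSelfAdjoint (sMin_pos hH)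
      (spectrum_subset_Icc_sMin_sMax hH.1)
  have hε1 : ε < 1 := by linarith [hε.2]
  have hcontract (t : ℕ) :
      ‖r * (1 - ((1 : ℝ) / m) • ∑ i, (Htil t i)⁻¹ * H) * s‖ ≤ ε ^ 2 / (1 - ε) := by
    simpa only [nonsing_inv_eq_ringInverse] using
      norm_mul_one_sub_average_inverse_mul_mul_le hs hrr hrs hsr
        (fun i => (hHtilPD t i).1.isSelfAdjoint) (fun i => (hHtilPD t i).isUnit) hε1
        (fun i => ⟨(happrox t i).1, (happrox t i).2⟩) (havg t)
  have herror (t : ℕ) : w (t + 1) - wstar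
      = (1 - ((1 : ℝ) / m) • ∑ i, (Htil t i)⁻¹ * H) *ᵥ (w t - wstar) := by
    rw [hupdate t, sub_mulVec, one_mulVec, smul_mulVec, sum_mulVec, sub_right_comm]
    simp only [mulVec_mulVec]
  have hrate : ε ^ 2 / (1 - ε) ≤ 3 * ε ^ 2 := by
    rw [div_le_iff₀ (by linarith)]
    nlinarith [sq_nonneg ε, hε.2]
  calc norm2 (w t - wstar)
      ≤ ‖s‖ * (ε ^ 2 / (1 - ε)) ^ t * ‖r‖ * norm2 (w 0 - wstar) :=
        norm2_le_pow_of_norm_mul_mul_le (e := fun t => w t - wstar) hsr herror hcontract t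
    _ ≤ (√(sMin hH.1))⁻¹ * (3 * ε ^ 2) ^ t * √(sMax hH.1) * norm2 (w 0 - wstar) := by
        gcongr
        exact Real.sqrt_nonneg _
    _ = (3 * ε ^ 2) ^ t * √(sMax hH.1 / sMin hH.1) * norm2 (w 0 - wstar) := by
        rw [Real.sqrt_div' _ (sMin_pos hH).le]
        ring
end
end

section
/- Let F : ℝ^d → ℝ be convex and twice continuously differentiable with Hessian L-Lipschitz in spectral norm, let r : ℝ^d → ℝ be convex, and let w* be a global minimizer of F + r. Fix an iterate w_t, let H_t = ∇²F(w_t) be symmetric positive definite, g_t = ∇F(w_t), and let ε ∈ (0, 1). Suppose a symmetric positive definite matrix H̃_t satisfies (1−ε)H_t ⪯ H̃_t ⪯ (1+ε)H_t, and define w_{t+1} as the global minimizer of z ↦ (1/2)‖z − (w_t − H̃_t⁻¹g_t)‖_{H̃_t}² + r(z). Then, writing Δ_t = w_t − w* and Δ_{t+1} = w_{t+1} − w*, one has ‖Δ_{t+1}‖_{H_t} ≤ (1/(1−ε))·( ε·‖Δ_t‖_{H_t} + (L/(2·√(σ_min(H_t))))·‖Δ_t‖₂² ). -/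
/-!
First-order optimality of the proximal step at `w_{t+1}` (tested at `w*`) and of `w*` for `F + r`
(tested at `w_{t+1}`) add up to
`‖Δ_{t+1}‖²_{H̃} ≤ ⟪Δ_{t+1}, H̃ Δ_t - (∇F(w_t) - ∇F(w*))⟫`.
Split `H̃ = H_t + (H̃ - H_t)`. The spectral sandwich bounds the `H̃ - H_t` part by
`ε ‖Δ_{t+1}‖_{H_t} ‖Δ_t‖_{H_t}`. The rest, `H_t Δ_t - (∇F(w_t) - ∇F(w*))`, is the remainder of the
first-order Taylor expansion of `∇F` at `w_t`, of norm at most `L/2 ‖Δ_t‖²` since the Hessian is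
`L`-Lipschitz; by Cauchy–Schwarz and `‖Δ_{t+1}‖ ≤ ‖Δ_{t+1}‖_{H_t} / √σ_min(H_t)` its contribution is
at most `L / (2 √σ_min(H_t)) ‖Δ_t‖² ‖Δ_{t+1}‖_{H_t}`. Finally `‖Δ_{t+1}‖²_{H̃} ≥ (1 - ε)
‖Δ_{t+1}‖²_{H_t}`, and dividing by `‖Δ_{t+1}‖_{H_t}` gives the recursion.
-/

open Matrix
open scoped RealInnerProductSpace

noncomputable section

/-- The `H`-weighted norm `‖x‖_H = √(xᵀHx)` of a vector in Euclidean space. -/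
def normHE {d : ℕ} (H : Matrix (Fin d) (Fin d) ℝ) (x : EuclideanSpace ℝ (Fin d)) : ℝ :=
  Real.sqrt ⟪x, Matrix.toEuclideanLin H x⟫

theorem norm_sub_sub_fderiv_le_of_lipschitz {E F : Type*} [NormedAddCommGroup E]
    [NormedSpace ℝ E] [NormedAddCommGroup F] [NormedSpace ℝ F] {G : E → F}
    {G' : E → E →L[ℝ] F} {L : ℝ} (hG : ∀ x, HasFDerivAt G (G' x) x)
    (hL : ∀ x y v, ‖G' x v - G' y v‖ ≤ L * ‖x - y‖ * ‖v‖) (a Δ : E) :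
    ‖G (a + Δ) - G a - G' (a + Δ) Δ‖ ≤ L / 2 * ‖Δ‖ ^ 2 := by
  set ψ : ℝ → F := fun t => G (a + t • Δ) - G a - t • G' (a + Δ) Δ
  have hψ : ∀ t, HasDerivAt ψ (G' (a + t • Δ) Δ - G' (a + Δ) Δ) t := by
    intro t
    have hline : HasDerivAt (fun s : ℝ => a + s • Δ) Δ t := by
      simpa using ((hasDerivAt_id t).smul_const Δ).const_add a
    exact (((hG _).comp_hasDerivAt t hline).sub_const (G a)).sub
      ((hasDerivAt_id t).smul_const (G' (a + Δ) Δ)) |>.congr_deriv (by simp)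
  have hB : ∀ t, HasDerivAt (fun s => L * ‖Δ‖ ^ 2 * (s - s ^ 2 / 2))
      (L * ‖Δ‖ ^ 2 * (1 - t)) t := fun t =>
    (((hasDerivAt_id' t).sub ((hasDerivAt_pow 2 t).div_const 2)).const_mul
      (L * ‖Δ‖ ^ 2)).congr_deriv (by ring)
  have hbound : ∀ t ∈ Set.Ico (0 : ℝ) 1,
      ‖G' (a + t • Δ) Δ - G' (a + Δ) Δ‖ ≤ L * ‖Δ‖ ^ 2 * (1 - t) := by
    intro t ht
    calc ‖G' (a + t • Δ) Δ - G' (a + Δ) Δ‖ ≤ L * ‖(a + t • Δ) - (a + Δ)‖ * ‖Δ‖ := hL _ _ _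
      _ = L * ‖Δ‖ ^ 2 * (1 - t) := by
        rw [add_sub_add_left_eq_sub, show t • Δ - Δ = (t - 1) • Δ by rw [sub_smul, one_smul],
          norm_smul, Real.norm_of_nonpos (by linarith [ht.2])]
        ring
  have := image_norm_le_of_norm_deriv_right_le_deriv_boundary
    (fun t _ => (hψ t).continuousAt.continuousWithinAt) (fun t _ => (hψ t).hasDerivWithinAt)
    (by simp [ψ]) hB hbound (Set.right_mem_Icc.2 zero_le_one)
  convert this using 1
  · simp [ψ]
  · ring

section InnerProductSpace

variable {E : Type*} [NormedAddCommGroup E] [InnerProductSpace ℝ E]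

theorem HasGradientAt.inner_sub_add_sub_nonneg_of_forall_le [CompleteSpace E] {f g : E → ℝ}
    {f' x : E} (hf : HasGradientAt f f' x) (hg : ConvexOn ℝ Set.univ g)
    (hmin : ∀ y, f x + g x ≤ f y + g y) (y : E) :
    0 ≤ ⟪f', y - x⟫ + (g y - g x) := by
  -- `g` lies below its chord on `[x, y]`, so `φ` is minimal at `0` on `[0, 1]`.
  set φ : ℝ → ℝ := fun t => f (x + t • (y - x)) + t * (g y - g x)
  have hφ : HasDerivAt φ (⟪f', y - x⟫ + (g y - g x)) 0 := by
    have hline : HasDerivAt (fun t : ℝ => x + t • (y - x)) (y - x) 0 := by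
      simpa using ((hasDerivAt_id (0 : ℝ)).smul_const (y - x)).const_add x
    have hf0 : HasGradientAt f f' (x + (0 : ℝ) • (y - x)) := by simpa using hf
    exact (hf0.hasFDerivAt.comp_hasDerivAt 0 hline).add
      ((hasDerivAt_id' 0).mul_const _) |>.congr_deriv (by simp)
  have hφmin : IsMinOn φ (Set.Icc 0 1) 0 := by
    intro t ht
    have hchord : g (x + t • (y - x)) ≤ g x + t * (g y - g x) := by
      have := hg.2 (Set.mem_univ x) (Set.mem_univ y) (sub_nonneg.2 ht.2) ht.1 (sub_add_cancel 1 t)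
      rw [show (1 - t) • x + t • y = x + t • (y - x) by module, smul_eq_mul, smul_eq_mul] at this
      linarith
    have := hmin (x + t • (y - x))
    simp only [Set.mem_ofPred_eq, φ, zero_smul, add_zero, zero_mul]
    linarith
  have hcone : (1 : ℝ) ∈ posTangentConeAt (Set.Icc (0 : ℝ) 1) 0 :=
    mem_posTangentConeAt_of_segment_subset (by simp [segment_eq_Icc])
  simpa using hφmin.localize.hasFDerivWithinAt_nonneg hφ.hasFDerivAt.hasFDerivWithinAt hcone

theorem ContDiff.differentiable_gradient [CompleteSpace E] {f : E → ℝ} (hf : ContDiff ℝ 2 f) :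
    Differentiable ℝ (gradient f) :=
  (InnerProductSpace.toDual ℝ E).symm.differentiable.comp
    ((hf.fderiv_right (m := 1) le_rfl).differentiable one_ne_zero)

theorem LinearMap.IsPositive.inner_le_sqrt_mul_sqrt {T : E →ₗ[ℝ] E} (hT : T.IsPositive)
    (x y : E) : ⟪x, T y⟫ ≤ √⟪x, T x⟫ * √⟪y, T y⟫ := by
  have hquad : ∀ t : ℝ, 0 ≤ ⟪y, T y⟫ * (t * t) + 2 * ⟪x, T y⟫ * t + ⟪x, T x⟫ := by
    intro t
    have h := hT.inner_nonneg_right (x + t • y)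
    have hsymm : ⟪y, T x⟫ = ⟪x, T y⟫ := by rw [← hT.isSymmetric, real_inner_comm]
    simp only [map_add, map_smul, inner_add_left, inner_add_right, real_inner_smul_left,
      real_inner_smul_right, hsymm] at h
    linarith
  have hdisc := discrim_le_zero hquad
  rw [discrim] at hdisc
  rw [← Real.sqrt_mul (hT.inner_nonneg_right x)]
  exact (le_abs_self _).trans (Real.abs_le_sqrt (by nlinarith))

theorem Real.sqrt_mul_sqrt_add_sqrt_mul_sqrt_le {a b c d : ℝ} (ha : 0 ≤ a) (hb : 0 ≤ b)
    (hc : 0 ≤ c) (hd : 0 ≤ d) : √a * √b + √c * √d ≤ √(a + c) * √(b + d) := by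
  rw [← Real.sqrt_mul (add_nonneg ha hc)]
  refine (le_abs_self _).trans (Real.abs_le_sqrt ?_)
  nlinarith [sq_nonneg (√a * √d - √c * √b), Real.sq_sqrt ha, Real.sq_sqrt hb, Real.sq_sqrt hc,
    Real.sq_sqrt hd]

theorem LinearMap.inner_le_mul_sqrt_mul_sqrt_of_isPositive {T S : E →ₗ[ℝ] E} {ε : ℝ}
    (hε : 0 ≤ ε) (hP : (ε • T + S).IsPositive) (hN : (ε • T - S).IsPositive) (x y : E) :
    ⟪x, S y⟫ ≤ ε * √⟪x, T x⟫ * √⟪y, T y⟫ := by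
  set P := ε • T + S
  set N := ε • T - S
  have hsplit : ⟪x, S y⟫ = (⟪x, P y⟫ + ⟪x, N (-y)⟫) / 2 := by
    simp only [P, N, map_neg, LinearMap.add_apply, LinearMap.sub_apply, LinearMap.smul_apply,
      inner_add_right, inner_sub_right, inner_neg_right, real_inner_smul_right]
    ring
  have hsum : ∀ z, ⟪z, P z⟫ + ⟪z, N z⟫ = √(2 * ε) ^ 2 * ⟪z, T z⟫ := by
    intro z
    simp only [P, N, LinearMap.add_apply, LinearMap.sub_apply, LinearMap.smul_apply,
      inner_add_right, inner_sub_right, real_inner_smul_right,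
      Real.sq_sqrt (by positivity : 0 ≤ 2 * ε)]
    ring
  have hNy : ⟪-y, N (-y)⟫ = ⟪y, N y⟫ := by simp
  calc ⟪x, S y⟫ = (⟪x, P y⟫ + ⟪x, N (-y)⟫) / 2 := hsplit
    _ ≤ (√⟪x, P x⟫ * √⟪y, P y⟫ + √⟪x, N x⟫ * √⟪y, N y⟫) / 2 := by
      gcongr
      · exact hP.inner_le_sqrt_mul_sqrt x y
      · exact hNy ▸ hN.inner_le_sqrt_mul_sqrt x (-y)
    _ ≤ √(⟪x, P x⟫ + ⟪x, N x⟫) * √(⟪y, P y⟫ + ⟪y, N y⟫) / 2 := by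
      gcongr
      exact Real.sqrt_mul_sqrt_add_sqrt_mul_sqrt_le (hP.inner_nonneg_right x)
        (hP.inner_nonneg_right y) (hN.inner_nonneg_right x) (hN.inner_nonneg_right y)
    _ = ε * √⟪x, T x⟫ * √⟪y, T y⟫ := by
      rw [hsum, hsum, Real.sqrt_mul (sq_nonneg _), Real.sqrt_mul (sq_nonneg _),
        Real.sqrt_sq (Real.sqrt_nonneg _)]
      linear_combination
        √⟪x, T x⟫ * √⟪y, T y⟫ / 2 * Real.mul_self_sqrt (by positivity : 0 ≤ 2 * ε)

end InnerProductSpace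

section WeightedNorm

variable {d : ℕ}

theorem normHE_nonneg (H : Matrix (Fin d) (Fin d) ℝ) (x : EuclideanSpace ℝ (Fin d)) :
    0 ≤ normHE H x :=
  Real.sqrt_nonneg _

theorem normHE_sq {H : Matrix (Fin d) (Fin d) ℝ} (hH : H.PosSemidef)
    (x : EuclideanSpace ℝ (Fin d)) : normHE H x ^ 2 = ⟪x, toEuclideanLin H x⟫ :=
  Real.sq_sqrt ((Matrix.isPositive_toEuclideanLin_iff.2 hH).inner_nonneg_right x)

open scoped MatrixOrder in
theorem sMin_mul_norm_sq_le {H : Matrix (Fin d) (Fin d) ℝ} (hH : H.IsHermitian)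
    (x : EuclideanSpace ℝ (Fin d)) : sMin hH * ‖x‖ ^ 2 ≤ ⟪x, toEuclideanLin H x⟫ := by
  have hle : algebraMap ℝ _ (sMin hH) ≤ H := by
    rw [algebraMap_le_iff_le_spectrum (A := Matrix (Fin d) (Fin d) ℝ) (ha := hH.isSelfAdjoint),
      hH.spectrum_real_eq_range_eigenvalues]
    rintro _ ⟨i, rfl⟩
    exact ciInf_le (Finite.bddBelow_range _) i
  rw [Matrix.le_iff, Algebra.algebraMap_eq_smul_one, ← Matrix.isPositive_toEuclideanLin_iff] at hle
  simpa [inner_sub_right, real_inner_smul_right, real_inner_self_eq_norm_sq]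
    using hle.inner_nonneg_right x

theorem norm_le_normHE_div_sqrt_sMin {H : Matrix (Fin d) (Fin d) ℝ} (hH : H.PosDef)
    (x : EuclideanSpace ℝ (Fin d)) : ‖x‖ ≤ normHE H x / √(sMin hH.1) := by
  -- For `d = 0` the infimum defining `sMin` is the junk value `0`, but then `x = 0`.
  rcases isEmpty_or_nonempty (Fin d) with hd | hd
  · simp [show x = 0 from PiLp.ext isEmptyElim, normHE]
  obtain ⟨i, hi⟩ := exists_eq_ciInf_of_finite (f := hH.1.eigenvalues)
  have hpos : 0 < sMin hH.1 := (hH.eigenvalues_pos i).trans_eq hi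
  rw [le_div_iff₀ (Real.sqrt_pos.2 hpos), normHE, ← Real.sqrt_sq (norm_nonneg x),
    ← Real.sqrt_mul (sq_nonneg _), mul_comm]
  exact Real.sqrt_le_sqrt (sMin_mul_norm_sq_le hH.1 x)

theorem mul_normHE_sq_le {H H' : Matrix (Fin d) (Fin d) ℝ} {c : ℝ} (hH : H.PosSemidef)
    (h : (H' - c • H).PosSemidef) (x : EuclideanSpace ℝ (Fin d)) :
    c * normHE H x ^ 2 ≤ ⟪x, toEuclideanLin H' x⟫ := by
  have := (Matrix.isPositive_toEuclideanLin_iff.2 h).inner_nonneg_right x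
  simp only [map_sub, map_smul, LinearMap.sub_apply, LinearMap.smul_apply, inner_sub_right,
    real_inner_smul_right] at this
  rw [normHE_sq hH]
  linarith

theorem inner_toEuclideanLin_sub_le {H H' : Matrix (Fin d) (Fin d) ℝ} {ε : ℝ} (hε : 0 ≤ ε)
    (h₁ : (H' - (1 - ε) • H).PosSemidef) (h₂ : ((1 + ε) • H - H').PosSemidef)
    (x y : EuclideanSpace ℝ (Fin d)) :
    ⟪x, toEuclideanLin (H' - H) y⟫ ≤ ε * normHE H x * normHE H y := by
  refine LinearMap.inner_le_mul_sqrt_mul_sqrt_of_isPositive hε ?_ ?_ x y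
  · convert Matrix.isPositive_toEuclideanLin_iff.2 h₁ using 1
    simp only [map_sub, map_smul]
    module
  · convert Matrix.isPositive_toEuclideanLin_iff.2 h₂ using 1
    simp only [map_sub, map_smul]
    module

theorem hasGradientAt_half_normHE_sq {H : Matrix (Fin d) (Fin d) ℝ} (hH : H.PosSemidef)
    (v w : EuclideanSpace ℝ (Fin d)) :
    HasGradientAt (fun z => 1 / 2 * normHE H (z - v) ^ 2) (toEuclideanLin H (w - v)) w := by
  have hT := Matrix.isPositive_toEuclideanLin_iff.2 hH
  have hq : (fun z => 1 / 2 * normHE H (z - v) ^ 2) =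
      fun z => 1 / 2 * ⟪z - v, (toEuclideanLin H).toContinuousLinearMap (z - v)⟫ := by
    funext z
    rw [normHE_sq hH]
    rfl
  rw [hasGradientAt_iff_hasFDerivAt, hq]
  have hsub := (hasFDerivAt_id (𝕜 := ℝ) w).sub_const v
  have := (hsub.inner ℝ
    ((toEuclideanLin H).toContinuousLinearMap.hasFDerivAt.comp w hsub)).const_mul (1 / 2)
  refine this.congr_fderiv (ContinuousLinearMap.ext fun u => ?_)
  simp only [LinearMap.coe_toContinuousLinearMap', Function.comp_apply, id_eq,
    ContinuousLinearMap.comp_apply, ContinuousLinearMap.prod_apply, ContinuousLinearMap.id_apply,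
    _root_.smul_apply, fderivInnerCLM_apply, smul_eq_mul, InnerProductSpace.toDual_apply_apply]
  rw [← real_inner_comm u, hT.isSymmetric]
  ring

theorem inner_toEuclideanLin_le_of_proxStep {H : Matrix (Fin d) (Fin d) ℝ} (hH : H.PosDef)
    {f r : EuclideanSpace ℝ (Fin d) → ℝ} (hr : ConvexOn ℝ Set.univ r)
    {xstar gstar : EuclideanSpace ℝ (Fin d)} (hf : HasGradientAt f gstar xstar)
    (hmin : ∀ y, f xstar + r xstar ≤ f y + r y) {x g xnext : EuclideanSpace ℝ (Fin d)}
    (hnext : ∀ z, 1 / 2 * normHE H (xnext - (x - toEuclideanLin H⁻¹ g)) ^ 2 + r xnext ≤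
      1 / 2 * normHE H (z - (x - toEuclideanLin H⁻¹ g)) ^ 2 + r z) :
    ⟪xnext - xstar, toEuclideanLin H (xnext - xstar)⟫ ≤
      ⟪xnext - xstar, toEuclideanLin H (x - xstar) - (g - gstar)⟫ := by
  have hstep : toEuclideanLin H (xnext - (x - toEuclideanLin H⁻¹ g)) =
      toEuclideanLin H (xnext - xstar) - (toEuclideanLin H (x - xstar) - g) := by
    rw [show xnext - (x - toEuclideanLin H⁻¹ g) = (xnext - xstar) - (x - xstar) +
        toEuclideanLin H⁻¹ g by abel, map_add, map_sub, ← LinearMap.comp_apply,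
      ← toLpLin_mul_same, mul_nonsing_inv _ (isUnit_iff_ne_zero.2 hH.det_pos.ne'), toLpLin_one,
      LinearMap.id_apply]
    abel
  have hprox := (hasGradientAt_half_normHE_sq hH.posSemidef _
    xnext).inner_sub_add_sub_nonneg_of_forall_le hr hnext xstar
  have hopt := hf.inner_sub_add_sub_nonneg_of_forall_le hr hmin xnext
  rw [hstep, ← neg_sub xnext xstar] at hprox
  simp only [inner_sub_left, inner_sub_right, inner_neg_right, real_inner_comm (xnext - xstar)]
    at hprox hopt ⊢
  linarith

end WeightedNorm

theorem le_one_div_mul_of_mul_sq_le_mul {a x K : ℝ} (ha : 0 < a) (hx : 0 ≤ x) (hK : 0 ≤ K)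
    (h : a * x ^ 2 ≤ x * K) : x ≤ 1 / a * K := by
  rw [one_div_mul_eq_div, le_div_iff₀ ha]
  rcases hx.eq_or_lt with rfl | hx
  · simpa using hK
  · nlinarith

theorem sspn_error_recursion_general {d : ℕ}
    (F : EuclideanSpace ℝ (Fin d) → ℝ)
    (hF : ContDiff ℝ 2 F)
    (L : ℝ)
    (Hess : EuclideanSpace ℝ (Fin d) → Matrix (Fin d) (Fin d) ℝ)
    (hHess : ∀ w y, fderiv ℝ (gradient F) w y = Matrix.toEuclideanLin (Hess w) y)
    (hLip : ∀ w w' x, ‖Matrix.toEuclideanLin (Hess w - Hess w') x‖ ≤ L * ‖w - w'‖ * ‖x‖)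
    (r : EuclideanSpace ℝ (Fin d) → ℝ) (hr : ConvexOn ℝ Set.univ r)
    (wstar : EuclideanSpace ℝ (Fin d)) (hmin : ∀ w, F wstar + r wstar ≤ F w + r w)
    (wt : EuclideanSpace ℝ (Fin d)) (hHt : (Hess wt).PosDef)
    (ε : ℝ) (hε : 0 < ε ∧ ε < 1)
    (Htil : Matrix (Fin d) (Fin d) ℝ) (hHtil : Htil.PosDef)
    (happrox : (Htil - (1 - ε) • Hess wt).PosSemidef ∧ ((1 + ε) • Hess wt - Htil).PosSemidef)
    (wnext : EuclideanSpace ℝ (Fin d))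
    (hwnext : ∀ z,
      (1 / 2) * normHE Htil (wnext -
          (wt - Matrix.toEuclideanLin Htil⁻¹ (gradient F wt))) ^ 2 + r wnext ≤
        (1 / 2) * normHE Htil (z -
          (wt - Matrix.toEuclideanLin Htil⁻¹ (gradient F wt))) ^ 2 + r z) :
    normHE (Hess wt) (wnext - wstar) ≤
      (1 / (1 - ε)) * (ε * normHE (Hess wt) (wt - wstar)
        + (L / (2 * Real.sqrt (sMin hHt.1))) * ‖wt - wstar‖ ^ 2) := by
  set H := Hess wt
  set g := gradient F wt
  set Δ := wt - wstar
  set Δ' := wnext - wstar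
  have hdescent := inner_toEuclideanLin_le_of_proxStep hHtil hr
    (hF.differentiable (by norm_num) wstar).hasGradientAt hmin hwnext
  have htaylor : ‖g - gradient F wstar - toEuclideanLin H Δ‖ ≤ L / 2 * ‖Δ‖ ^ 2 := by
    simpa [Δ] using norm_sub_sub_fderiv_le_of_lipschitz (G' := fun w =>
      (toEuclideanLin (Hess w)).toContinuousLinearMap) (fun w =>
        (hF.differentiable_gradient w).hasFDerivAt.congr_fderiv (ContinuousLinearMap.ext (hHess w)))
      (fun w w' x => by simpa using hLip w w' x) wstar Δ
  have hresidual : ⟪Δ', toEuclideanLin H Δ - (g - gradient F wstar)⟫ ≤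
      normHE H Δ' / √(sMin hHt.1) * (L / 2 * ‖Δ‖ ^ 2) :=
    (real_inner_le_norm _ _).trans <| mul_le_mul (norm_le_normHE_div_sqrt_sMin hHt Δ')
      (by rwa [norm_sub_rev]) (norm_nonneg _) (div_nonneg (normHE_nonneg _ _) (Real.sqrt_nonneg _))
  have hL : 0 ≤ L / (2 * √(sMin hHt.1)) * ‖Δ‖ ^ 2 := by
    rw [show L / (2 * √(sMin hHt.1)) * ‖Δ‖ ^ 2 = L / 2 * ‖Δ‖ ^ 2 / √(sMin hHt.1) by ring]
    exact div_nonneg ((norm_nonneg _).trans htaylor) (Real.sqrt_nonneg _)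
  refine le_one_div_mul_of_mul_sq_le_mul (by linarith [hε.2]) (normHE_nonneg _ _)
    (add_nonneg (mul_nonneg hε.1.le (normHE_nonneg _ _)) hL) ?_
  calc (1 - ε) * normHE H Δ' ^ 2 ≤ ⟪Δ', toEuclideanLin Htil Δ'⟫ :=
        mul_normHE_sq_le hHt.posSemidef happrox.1 Δ'
    _ ≤ ⟪Δ', toEuclideanLin Htil Δ - (g - gradient F wstar)⟫ := hdescent
    _ = ⟪Δ', toEuclideanLin (Htil - H) Δ⟫ + ⟪Δ', toEuclideanLin H Δ - (g - gradient F wstar)⟫ := by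
        simp only [map_sub, LinearMap.sub_apply, inner_sub_right]
        ring
    _ ≤ ε * normHE H Δ' * normHE H Δ + normHE H Δ' / √(sMin hHt.1) * (L / 2 * ‖Δ‖ ^ 2) :=
        add_le_add (inner_toEuclideanLin_sub_le hε.1.le happrox.1 happrox.2 Δ' Δ) hresidual
    _ = normHE H Δ' * (ε * normHE H Δ + L / (2 * √(sMin hHt.1)) * ‖Δ‖ ^ 2) := by ring

/-- error recursion for one step of sub-sampled proximal Newton,
`w_{t+1} = prox_r^{H̃_t}(w_t − H̃_t⁻¹∇F(w_t))`. -/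
theorem sspn_error_recursion {d : ℕ}
    (F : EuclideanSpace ℝ (Fin d) → ℝ)
    (hFconv : ConvexOn ℝ Set.univ F) (hF : ContDiff ℝ 2 F)
    (L : ℝ)
    (Hess : EuclideanSpace ℝ (Fin d) → Matrix (Fin d) (Fin d) ℝ)
    (hHess : ∀ w y, fderiv ℝ (gradient F) w y = Matrix.toEuclideanLin (Hess w) y)
    (hLip : ∀ w w' x, ‖Matrix.toEuclideanLin (Hess w - Hess w') x‖ ≤ L * ‖w - w'‖ * ‖x‖)
    (r : EuclideanSpace ℝ (Fin d) → ℝ) (hr : ConvexOn ℝ Set.univ r)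
    (wstar : EuclideanSpace ℝ (Fin d)) (hmin : ∀ w, F wstar + r wstar ≤ F w + r w)
    (wt : EuclideanSpace ℝ (Fin d)) (hHt : (Hess wt).PosDef)
    (ε : ℝ) (hε : 0 < ε ∧ ε < 1)
    (Htil : Matrix (Fin d) (Fin d) ℝ) (hHtil : Htil.PosDef)
    (happrox : (Htil - (1 - ε) • Hess wt).PosSemidef ∧ ((1 + ε) • Hess wt - Htil).PosSemidef)
    (wnext : EuclideanSpace ℝ (Fin d))
    (hwnext : ∀ z,
      (1 / 2) * normHE Htil (wnext -
          (wt - Matrix.toEuclideanLin Htil⁻¹ (gradient F wt))) ^ 2 + r wnext ≤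
        (1 / 2) * normHE Htil (z -
          (wt - Matrix.toEuclideanLin Htil⁻¹ (gradient F wt))) ^ 2 + r z) :
    normHE (Hess wt) (wnext - wstar) ≤
      (1 / (1 - ε)) * (ε * normHE (Hess wt) (wt - wstar)
        + (L / (2 * Real.sqrt (sMin hHt.1))) * ‖wt - wstar‖ ^ 2) :=
  sspn_error_recursion_general F hF L Hess hHess hLip r hr wstar hmin wt hHt ε hε Htil hHtil happrox
    wnext hwnext
end
end
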